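/- arXiv:1707.03202 — 3 statements merged into one kernel-verified Lean document; each statement's English description precedes it below -/
import Mathlib

section
/- C_{n+1} ≤_sW C₂ⁿ for all n ∈ ℕ: choice on a finite set with n+1 elements strongly Weihrauch reduces to the n-fold product of binary choice. -/
open scoped Classical

/-! ## Basic notions of Weihrauch complexity -/

/-- The finite prefix of length `m` of a point of Baire space, as a list. -/
def pref (p : ℕ → ℕ) (m : ℕ) : List ℕ := List.ofFn (fun i : Fin m => p i)

/-- Type-2 computability of a partial function on Baire space, defined via monotone
computable word functions producing longer and longer prefixes of the output. -/
def BaireComputable (F : (ℕ → ℕ) →. (ℕ → ℕ)) : Prop :=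
  ∃ ψ : List ℕ → List ℕ, Computable ψ ∧
    (∀ u v : List ℕ, u <+: v → ψ u <+: ψ v) ∧
    ∀ p q, q ∈ F p → ∀ n, ∃ m, (ψ (pref p m))[n]? = some (q n)

/-- The interleaving pairing `⟨p,q⟩` on Baire space. -/
def pairB (p q : ℕ → ℕ) : ℕ → ℕ := fun n => if n % 2 = 0 then p (n / 2) else q (n / 2)

def evenPart (r : ℕ → ℕ) : ℕ → ℕ := fun n => r (2 * n)

def oddPart (r : ℕ → ℕ) : ℕ → ℕ := fun n => r (2 * n + 1)

/-- The `i`-th component of the countable tupling `⟨p₀,p₁,…⟩⟨i,k⟩ = pᵢ(k)`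
(using the Cantor pairing). -/
def proj (r : ℕ → ℕ) (i : ℕ) : ℕ → ℕ := fun k => r (Nat.pair i k)

/-- A represented space: a set `X` together with a surjective partial map
from Baire space onto `X`. -/
structure RepSp (X : Type*) where
  δ : (ℕ → ℕ) →. X
  surj : ∀ x : X, ∃ p, x ∈ δ p

theorem mem_part_mk {α : Type*} {D : Prop} {g : D → α} {a : α} (h : D) (e : g h = a) :
    a ∈ Part.mk D g := Part.mem_mk_iff.mpr ⟨h, e⟩

/-- The identity representation of Baire space. -/
def repBaire : RepSp (ℕ → ℕ) where
  δ := fun p => Part.some p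
  surj := fun p => ⟨p, Part.mem_some p⟩

/-- The standard representation of the natural numbers. -/
def repNat : RepSp ℕ where
  δ := fun p => Part.some (p 0)
  surj := fun n => ⟨fun _ => n, Part.mem_some n⟩

/-- `F` is a realizer of the problem `f :⊆ X ⇉ Y` (a problem is a multi-valued
function `f : X → Set Y`, whose domain is the set of `x` with `f x` nonempty). -/
def Realizes {X Y : Type*} (δX : RepSp X) (δY : RepSp Y)
    (f : X → Set Y) (F : (ℕ → ℕ) →. (ℕ → ℕ)) : Prop :=
  ∀ p x, x ∈ δX.δ p → (f x).Nonempty → ∃ q ∈ F p, ∃ y ∈ δY.δ q, y ∈ f x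

/-- Weihrauch reducibility: `f ≤_W g` iff there are computable `H, K` such that
`p ↦ H⟨p, G(K(p))⟩` realizes `f` whenever `G` realizes `g`. -/
def WRed {X Y Z W : Type*} (δX : RepSp X) (δY : RepSp Y) (δZ : RepSp Z) (δW : RepSp W)
    (f : X → Set Y) (g : Z → Set W) : Prop :=
  ∃ H K : (ℕ → ℕ) →. (ℕ → ℕ), BaireComputable H ∧ BaireComputable K ∧
    ∀ G : (ℕ → ℕ) →. (ℕ → ℕ), Realizes δZ δW g G →
      Realizes δX δY f
        (fun p => (K p).bind fun r => (G r).bind fun q => H (pairB p q))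

/-- Strong Weihrauch reducibility: `f ≤_sW g` iff there are computable `H, K`
such that `H ∘ G ∘ K` realizes `f` whenever `G` realizes `g`. -/
def SWRed {X Y Z W : Type*} (δX : RepSp X) (δY : RepSp Y) (δZ : RepSp Z) (δW : RepSp W)
    (f : X → Set Y) (g : Z → Set W) : Prop :=
  ∃ H K : (ℕ → ℕ) →. (ℕ → ℕ), BaireComputable H ∧ BaireComputable K ∧
    ∀ G : (ℕ → ℕ) →. (ℕ → ℕ), Realizes δZ δW g G →
      Realizes δX δY f (fun p => (K p).bind fun r => (G r).bind fun q => H q)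

/-- Weihrauch equivalence. -/
def WEquiv {X Y Z W : Type*} (δX : RepSp X) (δY : RepSp Y) (δZ : RepSp Z) (δW : RepSp W)
    (f : X → Set Y) (g : Z → Set W) : Prop :=
  WRed δX δY δZ δW f g ∧ WRed δZ δW δX δY g f

/-- Strong Weihrauch equivalence. -/
def SWEquiv {X Y Z W : Type*} (δX : RepSp X) (δY : RepSp Y) (δZ : RepSp Z) (δW : RepSp W)
    (f : X → Set Y) (g : Z → Set W) : Prop :=
  SWRed δX δY δZ δW f g ∧ SWRed δZ δW δX δY g f

/-- The identity problem on Baire space. -/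
def idProblem : (ℕ → ℕ) → Set (ℕ → ℕ) := fun p => {p}

/-! ## Constructions on representations and problems -/

/-- Representation of the product of two represented spaces. -/
def prodRep {X Z : Type*} (δX : RepSp X) (δZ : RepSp Z) : RepSp (X × Z) where
  δ := fun r => (δX.δ (evenPart r)).bind fun x => (δZ.δ (oddPart r)).map fun z => (x, z)
  surj := by
    intro xz
    obtain ⟨p, hp⟩ := δX.surj xz.1
    obtain ⟨q, hq⟩ := δZ.surj xz.2
    have he : evenPart (pairB p q) = p := by
      funext n
      have h1 : (2 * n) % 2 = 0 := by omega
      have h2 : (2 * n) / 2 = n := by omega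
      simp [evenPart, pairB, h1, h2]
    have ho : oddPart (pairB p q) = q := by
      funext n
      have h1 : ¬((2 * n + 1) % 2 = 0) := by omega
      have h2 : (2 * n + 1) / 2 = n := by omega
      simp [oddPart, pairB, h1, h2]
    refine ⟨pairB p q, Part.mem_bind_iff.mpr ⟨xz.1, by rw [he]; exact hp,
      (Part.mem_map_iff _).mpr ⟨xz.2, by rw [ho]; exact hq, rfl⟩⟩⟩

/-- The product `f × g` of two problems. -/
def prodProblem {X Y Z W : Type*} (f : X → Set Y) (g : Z → Set W) :
    X × Z → Set (Y × W) :=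
  fun xz => f xz.1 ×ˢ g xz.2

/-- Representation of the disjoint union of two represented spaces. -/
def sumRep {X Z : Type*} (δX : RepSp X) (δZ : RepSp Z) : RepSp (X ⊕ Z) where
  δ := fun r =>
    if r 0 = 0 then (δX.δ fun n => r (n + 1)).map Sum.inl
    else if r 0 = 1 then (δZ.δ fun n => r (n + 1)).map Sum.inr
    else Part.none
  surj := by
    rintro (x | z)
    · obtain ⟨p, hp⟩ := δX.surj x
      refine ⟨fun n => Nat.casesOn n 0 p, ?_⟩
      show Sum.inl x ∈ (δX.δ p).map Sum.inl
      exact (Part.mem_map_iff _).mpr ⟨x, hp, rfl⟩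
    · obtain ⟨p, hp⟩ := δZ.surj z
      refine ⟨fun n => Nat.casesOn n 1 p, ?_⟩
      show Sum.inr z ∈ (δZ.δ p).map Sum.inr
      exact (Part.mem_map_iff _).mpr ⟨z, hp, rfl⟩

/-- The coproduct `f ⊔ g` of two problems. -/
def coprodProblem {X Y Z W : Type*} (f : X → Set Y) (g : Z → Set W) :
    X ⊕ Z → Set (Y ⊕ W)
  | Sum.inl x => Sum.inl '' f x
  | Sum.inr z => Sum.inr '' g z

/-- The meet `f ⊓ g` of two problems. -/
def meetProblem {X Y Z W : Type*} (f : X → Set Y) (g : Z → Set W) :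
    X × Z → Set (Y ⊕ W) :=
  fun xz => Sum.inl '' f xz.1 ∪ Sum.inr '' g xz.2

/-- Representation of the space of sequences `X^ℕ` via the countable tupling. -/
noncomputable def seqRep {X : Type*} (δX : RepSp X) : RepSp (ℕ → X) where
  δ := fun r => Part.mk (∀ i : ℕ, ∃ x, x ∈ δX.δ (proj r i))
    (fun h i => Classical.choose (h i))
  surj := by
    intro x
    choose p hp using fun i => δX.surj (x i)
    refine ⟨fun m => p (Nat.unpair m).1 (Nat.unpair m).2, ?_⟩
    have hproj : ∀ i, proj (fun m => p (Nat.unpair m).1 (Nat.unpair m).2) i = p i := by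
      intro i; funext k; simp [proj]
    have hdom : ∀ i : ℕ, ∃ y, y ∈ δX.δ (proj (fun m => p (Nat.unpair m).1 (Nat.unpair m).2) i) :=
      fun i => ⟨x i, by rw [hproj i]; exact hp i⟩
    refine mem_part_mk hdom ?_
    funext i
    exact Part.mem_unique (Classical.choose_spec (hdom i)) (by rw [hproj i]; exact hp i)

/-- The parallelization `f̂` of a problem. -/
def parallelProblem {X Y : Type*} (f : X → Set Y) : (ℕ → X) → Set (ℕ → Y) :=
  fun x => {y | ∀ i, y i ∈ f (x i)}

/-- Representation of the finite power `Xⁿ` via the countable tupling. -/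
noncomputable def finProdRep (n : ℕ) {X : Type*} (δX : RepSp X) : RepSp (Fin n → X) where
  δ := fun r => Part.mk (∀ i : Fin n, ∃ x, x ∈ δX.δ (proj r i))
    (fun h i => Classical.choose (h i))
  surj := by
    intro x
    choose p hp using fun i => δX.surj (x i)
    classical
    refine ⟨fun m => if h : (Nat.unpair m).1 < n then p ⟨_, h⟩ (Nat.unpair m).2 else 0, ?_⟩
    have hproj : ∀ i : Fin n,
        proj (fun m => if h : (Nat.unpair m).1 < n then p ⟨_, h⟩ (Nat.unpair m).2 else 0) i
          = p i := by
      intro i; funext k; simp [proj, i.isLt]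
    have hdom : ∀ i : Fin n, ∃ y, y ∈ δX.δ
        (proj (fun m => if h : (Nat.unpair m).1 < n then p ⟨_, h⟩ (Nat.unpair m).2 else 0) i) :=
      fun i => ⟨x i, by rw [hproj i]; exact hp i⟩
    refine mem_part_mk hdom ?_
    funext i
    exact Part.mem_unique (Classical.choose_spec (hdom i)) (by rw [hproj i]; exact hp i)

/-- The `n`-fold product `fⁿ` of a problem with itself. -/
def finProdProblem (n : ℕ) {X Y : Type*} (f : X → Set Y) :
    (Fin n → X) → Set (Fin n → Y) :=
  fun x => {y | ∀ i, y i ∈ f (x i)}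

/-- Representation of the space `X*` of words over `X`. -/
noncomputable def starRep {X : Type*} (δX : RepSp X) : RepSp (Σ n : ℕ, Fin n → X) where
  δ := fun r => Part.mk (∀ i : Fin (r 0), ∃ x, x ∈ δX.δ (proj (fun m => r (m + 1)) i))
    (fun h => ⟨r 0, fun i => Classical.choose (h i)⟩)
  surj := by
    rintro ⟨n, x⟩
    choose p hp using fun i => δX.surj (x i)
    classical
    have hproj : ∀ i : Fin n,
        proj (fun m' => if h : (Nat.unpair m').1 < n then p ⟨_, h⟩ (Nat.unpair m').2 else 0) i
          = p i := by
      intro i; funext k; simp [proj, i.isLt]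
    have hdom : ∀ i : Fin n, ∃ y, y ∈ δX.δ
        (proj (fun m' => if h : (Nat.unpair m').1 < n then p ⟨_, h⟩ (Nat.unpair m').2 else 0) i) :=
      fun i => ⟨x i, by rw [hproj i]; exact hp i⟩
    refine ⟨fun m => Nat.casesOn m n
      (fun m' => if h : (Nat.unpair m').1 < n then p ⟨_, h⟩ (Nat.unpair m').2 else 0),
      Part.mem_mk_iff.mpr ⟨hdom, ?_⟩⟩
    have hx : (fun i : Fin n => Classical.choose (hdom i)) = x := funext fun i =>
      Part.mem_unique (Classical.choose_spec (hdom i)) (by rw [hproj i]; exact hp i)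
    exact congrArg (Sigma.mk n) hx

/-- The finite parallelization `f*` of a problem. -/
def starProblem {X Y : Type*} (f : X → Set Y) :
    (Σ n : ℕ, Fin n → X) → Set (Σ n : ℕ, Fin n → Y) :=
  fun x => {y | ∃ e : x.1 = y.1, ∀ i : Fin x.1, y.2 (Fin.cast e i) ∈ f (x.2 i)}

/-- Representation of a countable disjoint union of represented spaces. -/
def csumRep {Z : ℕ → Type*} (δZ : ∀ i, RepSp (Z i)) : RepSp (Σ i, Z i) where
  δ := fun r => ((δZ (r 0)).δ (fun n => r (n + 1))).map fun z => ⟨r 0, z⟩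
  surj := by
    rintro ⟨i, z⟩
    obtain ⟨p, hp⟩ := (δZ i).surj z
    exact ⟨fun n => Nat.casesOn n i p, (Part.mem_map_iff _).mpr ⟨z, hp, rfl⟩⟩

/-- The countable coproduct `⊔ᵢ gᵢ` of a sequence of problems. -/
def csumProblem {Z W : ℕ → Type*} (g : ∀ i, Z i → Set (W i)) :
    (Σ i, Z i) → Set (Σ i, W i) :=
  fun x => Sigma.mk x.1 '' g x.1 x.2

/-! ## Limits and jumps -/

/-- The limit map on Baire space, as a (single-valued) problem:
`lim⟨p₀,p₁,…⟩` is the pointwise limit of the sequence `(pₙ)ₙ`. -/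
def limProblem : (ℕ → ℕ) → Set (ℕ → ℕ) :=
  fun r => {q | ∀ n, ∃ N, ∀ m, N ≤ m → proj r m n = q n}

/-- The limit map on Baire space as a partial (single-valued) function. -/
noncomputable def limP : (ℕ → ℕ) →. (ℕ → ℕ) :=
  fun r => Part.mk (∀ n, ∃ N, ∀ m, N ≤ m → proj r m n = proj r N n)
    (fun h n => proj r (Classical.choose (h n)) n)

/-- The jump `(X′, δ′)` of a represented space: `δ′ := δ ∘ lim`. -/
noncomputable def jumpRep {X : Type*} (δ : RepSp X) : RepSp X where
  δ := fun p => (limP p).bind δ.δ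
  surj := by
    intro x
    obtain ⟨p, hp⟩ := δ.surj x
    refine ⟨fun m => p (Nat.unpair m).2, Part.mem_bind_iff.mpr ⟨p, ?_, hp⟩⟩
    have hproj : ∀ m, proj (fun m => p (Nat.unpair m).2) m = p := by
      intro m; funext k; simp [proj]
    have hdom : ∀ n, ∃ N, ∀ m, N ≤ m →
        proj (fun m => p (Nat.unpair m).2) m n = proj (fun m => p (Nat.unpair m).2) N n :=
      fun n => ⟨0, fun m _ => by rw [hproj m, hproj 0]⟩
    refine mem_part_mk hdom ?_
    funext n
    rw [hproj]

/-! ## Choice problems -/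

/-- The representation of subsets of `ℕ` by enumerations of their complements:
`p` is a name of `A` iff `p` enumerates (via `p m = n + 1`) exactly the `n ∉ A`. -/
def enumNegRep : RepSp (Set ℕ) where
  δ := fun p => Part.some {n | ∀ m, p m ≠ n + 1}
  surj := by
    intro S
    by_cases h : Sᶜ.Nonempty
    · obtain ⟨f, hf⟩ := (Set.to_countable Sᶜ).exists_eq_range h
      refine ⟨fun m => f m + 1, Part.mem_some_iff.mpr ?_⟩
      ext n
      simp only [Set.mem_setOf_eq]
      constructor
      · intro hn m hm
        have hfm : f m ∈ Sᶜ := by rw [hf]; exact ⟨m, rfl⟩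
        have hfmn : f m = n := by omega
        rw [hfmn] at hfm
        exact hfm hn
      · intro hn
        by_contra hS
        have hmem : n ∈ Sᶜ := hS
        rw [hf] at hmem
        obtain ⟨m, hm⟩ := hmem
        exact hn m (by omega)
    · refine ⟨fun _ => 0, Part.mem_some_iff.mpr ?_⟩
      have hS : S = Set.univ := by
        rw [← compl_compl S, Set.not_nonempty_iff_eq_empty.mp h, Set.compl_empty]
      rw [hS]
      ext n
      simp

/-- Choice on the natural numbers: given (a name of) a nonempty set `A ⊆ ℕ`,
find an element of `A`. -/
def CNat : Set ℕ → Set ℕ := fun A => A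

/-- Choice on the finite set `{0, …, k-1}`. -/
def CFin (k : ℕ) : Set ℕ → Set ℕ := fun A => {n | n ∈ A ∧ A ⊆ Set.Iio k}

/-- The limited principle of omniscience as a problem. -/
noncomputable def LPOProblem : (ℕ → ℕ) → Set ℕ :=
  fun p => {if ∃ k, p k = 0 then 1 else 0}


/-- Restriction of a problem on Baire space to a set `A`. -/
def restrictProblem (F : (ℕ → ℕ) → Set (ℕ → ℕ)) (A : Set (ℕ → ℕ)) :
    (ℕ → ℕ) → Set (ℕ → ℕ) :=
  fun p => {q | q ∈ F p ∧ p ∈ A}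

/-- A problem is a fractal if it has a representative on Baire space all of whose
restrictions to clopen sets meeting its domain are Weihrauch equivalent to it. -/
def Fractal {X Y : Type*} (δX : RepSp X) (δY : RepSp Y) (f : X → Set Y) : Prop :=
  ∃ F : (ℕ → ℕ) → Set (ℕ → ℕ),
    WEquiv repBaire repBaire δX δY F f ∧
    ∀ A : Set (ℕ → ℕ), IsClopen A → (A ∩ {p | (F p).Nonempty}).Nonempty →
      WEquiv repBaire repBaire repBaire repBaire (restrictProblem F A) F

/-- A problem `f` is densely realized if for every name `p` of an admissible instance
the set of names of solutions is dense in the domain of the output representation. -/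
def DenselyRealized {X Y : Type*} (δX : RepSp X) (δY : RepSp Y) (f : X → Set Y) : Prop :=
  ∀ p, ∀ x ∈ δX.δ p, (f x).Nonempty →
    {q : ℕ → ℕ | (δY.δ q).Dom} ⊆ closure {q : ℕ → ℕ | ∃ y ∈ δY.δ q, y ∈ f x}

/-- Turing reducibility on Baire space: `a` is computable from `b`. -/
def TRed (a b : ℕ → ℕ) : Prop := ∃ F, BaireComputable F ∧ a ∈ F b

/-- The two-point space `{p, q}` represented by the identity. -/
def pqRep (p q : ℕ → ℕ) : RepSp {r : ℕ → ℕ // r = p ∨ r = q} where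
  δ := fun r => Part.mk (r = p ∨ r = q) (fun h => ⟨r, h⟩)
  surj := fun x => ⟨x.1, Part.mem_mk_iff.mpr ⟨x.2, rfl⟩⟩

/-- The problem `m_A` associated with a set `A ⊆ ℕ`. -/
noncomputable def mProblem (p q : ℕ → ℕ) (A : Set ℕ) :
    ℕ → Set {r : ℕ → ℕ // r = p ∨ r = q} :=
  fun n => {y | y.1 = if n ∈ A then p else q}

/-- The join `A ⊕ B` of two sets of natural numbers. -/
def mJoin (A B : Set ℕ) : Set ℕ :=
  {k | (k % 2 = 0 ∧ k / 2 ∈ A) ∨ (k % 2 = 1 ∧ k / 2 ∈ B)}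

/-- The cardinality `#f` of a problem: the supremum of the cardinalities of sets
`M ⊆ dom f` whose images under `f` are pairwise disjoint. -/
noncomputable def problemCard {X Y : Type} (f : X → Set Y) : Cardinal :=
  sSup {c | ∃ M : Set X, (∀ x ∈ M, (f x).Nonempty) ∧ M.PairwiseDisjoint f ∧
    c = Cardinal.mk M}

/-- Computability of a problem: it has a computable realizer. -/
def ComputableProblem {X Y : Type*} (δX : RepSp X) (δY : RepSp Y) (f : X → Set Y) : Prop :=
  ∃ F, BaireComputable F ∧ Realizes δX δY f F

/-- The minimum function on Baire space. -/
def minProblem : (ℕ → ℕ) → Set ℕ :=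
  fun p => {n | n ∈ Set.range p ∧ ∀ m, n ≤ p m}

/-- The complementary minimum function `minᶜ`. -/
def mincProblem : (ℕ → ℕ) → Set ℕ :=
  fun p => {n | (∀ m, p m ≠ n) ∧ ∀ j, j < n → ∃ m, p m = j}

/-- The maximum function on Baire space (defined on bounded sequences). -/
def maxProblem : (ℕ → ℕ) → Set ℕ :=
  fun p => {n | n ∈ Set.range p ∧ ∀ m, p m ≤ n}


/-!
Given an enumeration `p` of the complement of `A ⊆ {0, …, n}`, the `i`-th instance of `C₂`
(`i < n`) runs a race between the events "`i ∉ A` has been enumerated" and "every `l` with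
`i < l ≤ n` has been enumerated": whichever is observed first removes the answer `1`, resp. `0`.
An answer `1` thus certifies that `i ∉ A` forces `A ⊆ {0, …, i}`, and an answer `0` that
`A ⊆ {0, …, i}` forces `i ∉ A`. The least `i` answered by `1` (or `n` if there is none) lies
in `A`: below `max A` it lies in `A` by the first certificate, and it cannot pass `max A`,
since the race at `max A` can only be answered by `1`.
-/

theorem pref_eq_map_range (p : ℕ → ℕ) (L : ℕ) : pref p L = (List.range L).map p := by
  apply List.ext_getElem <;> simp [pref]

theorem mem_pref_iff {p : ℕ → ℕ} {L v : ℕ} : v ∈ pref p L ↔ ∃ s < L, p s = v := by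
  simp [pref_eq_map_range]

theorem pref_subset_pref {p : ℕ → ℕ} {L L' : ℕ} (h : L ≤ L') : pref p L ⊆ pref p L' :=
  fun _ hv => by
    obtain ⟨s, hs, rfl⟩ := mem_pref_iff.1 hv
    exact mem_pref_iff.2 ⟨s, by omega, rfl⟩

theorem getD_pref {p : ℕ → ℕ} {L s : ℕ} (h : s < L) : (pref p L).getD s 0 = p s := by
  simp [pref_eq_map_range, h]

def prefixMap (e : List ℕ → ℕ → ℕ) (d : ℕ) : (ℕ → ℕ) →. (ℕ → ℕ) :=
  fun p => Part.some fun x => e (pref p (x + d)) x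

theorem baireComputable_prefixMap {e : List ℕ → ℕ → ℕ} (he : Primrec₂ e) (d : ℕ) :
    BaireComputable (prefixMap e d) := by
  refine ⟨fun u => (List.range (u.length + 1 - d)).map fun x => e (u.take (x + d)) x,
    ?_, ?_, ?_⟩
  · have hg : Primrec₂ fun (u : List ℕ) (x : ℕ) => e (u.take (x + d)) x :=
      he.comp (Primrec.list_take.comp (Primrec.nat_add.comp Primrec.snd (Primrec.const d))
        Primrec.fst) Primrec.snd
    exact (Primrec.list_map (Primrec.list_range.comp
      (Primrec.nat_sub.comp (Primrec.succ.comp Primrec.list_length) (Primrec.const d))) hg).to_comp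
  · rintro u v ⟨w, rfl⟩
    rw [List.prefix_iff_getElem]
    refine ⟨by simp; omega, fun x hx => ?_⟩
    simp only [List.length_map, List.length_range] at hx
    simp [List.take_append_of_le_length (show x + d ≤ u.length by omega)]
  · rintro p q hq x
    rw [prefixMap, Part.mem_some_iff] at hq
    subst hq
    refine ⟨x + d, ?_⟩
    have hlen : (pref p (x + d)).length = x + d := by simp [pref]
    simp [hlen, List.getElem?_range (show x < x + d + 1 - d by omega), List.take_of_length_le]

theorem Nat.pair_le_pair_right (i : ℕ) {k k' : ℕ} (h : k ≤ k') : Nat.pair i k ≤ Nat.pair i k' :=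
  h.eq_or_lt.elim (fun h => h ▸ le_rfl) fun h => (Nat.pair_lt_pair_right i h).le

theorem mem_finProdRep_iff {n : ℕ} {X : Type*} {δX : RepSp X} {r : ℕ → ℕ} {x : Fin n → X} :
    x ∈ (finProdRep n δX).δ r ↔ ∀ i : Fin n, x i ∈ δX.δ (proj r i) := by
  refine ⟨fun hx i => ?_, fun hx => mem_part_mk (fun i : Fin n => ⟨x i, hx i⟩) ?_⟩
  · obtain ⟨hdom, rfl⟩ := Part.mem_mk_iff.mp hx
    exact Classical.choose_spec (hdom i)
  · exact funext fun i => Part.mem_unique (Classical.choose_spec _) (hx i)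

/-- The set named by `p` in `enumNegRep`. -/
def namedSet (p : ℕ → ℕ) : Set ℕ := {m | ∀ k, p k ≠ m + 1}

theorem not_mem_namedSet_iff {p : ℕ → ℕ} {m : ℕ} : m ∉ namedSet p ↔ ∃ k, p k = m + 1 := by
  simp [namedSet]

theorem mem_of_race_answers {A : Set ℕ} {n : ℕ} (b : ℕ → ℕ) (hne : A.Nonempty)
    (hA : A ⊆ Set.Iio (n + 1))
    (h1 : ∀ i < n, b i = 1 → i ∉ A → ∀ l ≤ n, i < l → l ∉ A)
    (h0 : ∀ i < n, b i ≠ 1 → (∀ l ≤ n, i < l → l ∉ A) → i ∉ A) :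
    (List.range n).findIdx (fun i => b i == 1) ∈ A := by
  have hmn : (List.range n).findIdx (fun i => b i == 1) ≤ n := by
    simpa using List.findIdx_le_length (xs := List.range n)
  have hm1 (h : (List.range n).findIdx (fun i => b i == 1) < n) :
      b ((List.range n).findIdx (fun i => b i == 1)) = 1 := by
    have := List.findIdx_getElem (p := fun i => b i == 1) (xs := List.range n)
      (w := by simpa using h)
    rw [List.getElem_range] at this
    simpa using this
  have hmin (i : ℕ) (h : i < (List.range n).findIdx (fun i => b i == 1)) : b i ≠ 1 := by
    simpa using List.not_of_lt_findIdx h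
  set m := (List.range n).findIdx (fun i => b i == 1)
  have hle (l : ℕ) (hl : l ∈ A) : l ≤ n := Nat.lt_succ_iff.mp (hA hl)
  obtain ⟨a₀, ha₀⟩ := hne
  set a := Nat.findGreatest (· ∈ A) n
  have ha : a ∈ A := Nat.findGreatest_spec (P := (· ∈ A)) (hle a₀ ha₀) ha₀
  have hmax (l : ℕ) (hl : l ∈ A) : l ≤ a := Nat.le_findGreatest (hle l hl) hl
  rcases lt_or_ge m a with hma | ham
  · by_contra hm
    have hmn' : m < n := lt_of_lt_of_le hma (hle a ha)
    exact h1 m hmn' (hm1 hmn') hm a (hle a ha) hma ha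
  · obtain hma | ham := ham.eq_or_lt
    · exact hma ▸ ha
    · exact absurd ha <| h0 a (by omega) (hmin a ham)
        fun l _ hal hl => absurd (hmax l hl) (by omega)

namespace CFinSucc

/-- `i + 1 ∈ u` means that the enumeration has revealed `i ∉ A`. -/
abbrev Excluded (u : List ℕ) (i : ℕ) : Prop := i + 1 ∈ u

abbrev AboveExcluded (n : ℕ) (u : List ℕ) (i : ℕ) : Prop :=
  ∀ l ∈ List.range (n + 1), i < l → Excluded u l

/-- Value `2` removes the answer `1`, value `1` removes the answer `0`. -/
def raceValue (n : ℕ) (u : List ℕ) (i : ℕ) : ℕ :=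
  if Excluded u i ∧ ¬ AboveExcluded n u i then 2
  else if AboveExcluded n u i ∧ ¬ Excluded u i then 1
  else 0

/-- Position `⟨i, k⟩` of the name of the `i`-th instance: for even `k` it removes `k / 2 + 2`,
so that every instance is a subset of `{0, 1}`; for odd `k` it runs the race. -/
def instanceValue (n : ℕ) (u : List ℕ) (x : ℕ) : ℕ :=
  if x.unpair.2 % 2 = 0 then x.unpair.2 / 2 + 3 else raceValue n u x.unpair.1

def firstOne (n : ℕ) (u : List ℕ) (_ : ℕ) : ℕ :=
  (List.range n).findIdx fun i => u.getD (Nat.pair i 0) 0 == 1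

theorem primrecRel_excluded : PrimrecRel Excluded :=
  ((PrimrecRel.exists_mem_list Primrec.eq).comp Primrec.fst
    (Primrec.succ.comp Primrec.snd)).of_eq fun _ => by simp

theorem primrec_raceValue (n : ℕ) : Primrec₂ (raceValue n) := by
  have hAbove : PrimrecRel (AboveExcluded n) := by
    have hstep : PrimrecRel fun (l : ℕ) (ui : List ℕ × ℕ) => ¬ ui.2 < l ∨ Excluded ui.1 l :=
      (Primrec.nat_lt.comp (Primrec.snd.comp Primrec.snd) Primrec.fst).not.or
        (primrecRel_excluded.comp (Primrec.fst.comp Primrec.snd) Primrec.fst)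
    exact ((PrimrecRel.forall_mem_list hstep).comp (Primrec.const (List.range (n + 1)))
      Primrec.id).of_eq fun _ => by simp only [AboveExcluded, imp_iff_not_or, id]
  exact Primrec.ite (primrecRel_excluded.and hAbove.not) (Primrec.const 2)
    (Primrec.ite (hAbove.and primrecRel_excluded.not) (Primrec.const 1) (Primrec.const 0))

theorem primrec_instanceValue (n : ℕ) : Primrec₂ (instanceValue n) := by
  have ht : Primrec fun a : List ℕ × ℕ => a.2.unpair.2 :=
    Primrec.snd.comp (Primrec.unpair.comp Primrec.snd)
  exact Primrec.ite (Primrec.eq.comp (Primrec.nat_mod.comp ht (Primrec.const 2)) (Primrec.const 0))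
    (Primrec.nat_add.comp (Primrec.nat_div.comp ht (Primrec.const 2)) (Primrec.const 3))
    ((primrec_raceValue n).comp Primrec.fst (Primrec.fst.comp (Primrec.unpair.comp Primrec.snd)))

theorem primrec_firstOne (n : ℕ) : Primrec₂ (firstOne n) :=
  Primrec.list_findIdx (Primrec.const (List.range n))
    (Primrec.beq.comp ((Primrec.list_getD 0).comp (Primrec.fst.comp Primrec.fst)
      (Primrec₂.natPair.comp Primrec.snd (Primrec.const 0))) (Primrec.const 1))

theorem raceValue_eq_two {n : ℕ} {u : List ℕ} {i : ℕ} :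
    raceValue n u i = 2 ↔ Excluded u i ∧ ¬ AboveExcluded n u i := by
  unfold raceValue; split_ifs <;> simp_all

theorem raceValue_eq_one {n : ℕ} {u : List ℕ} {i : ℕ} :
    raceValue n u i = 1 ↔ AboveExcluded n u i ∧ ¬ Excluded u i := by
  unfold raceValue; split_ifs <;> simp only [OfNat.ofNat_ne_one, false_iff, true_iff]
    <;> tauto

section Instances

variable (n : ℕ) (p : ℕ → ℕ) (i : ℕ)

def instancesName : ℕ → ℕ := fun x => instanceValue n (pref p x) x

def raceInstance : Set ℕ := namedSet (proj (instancesName n p) i)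

theorem instancesName_pair (k : ℕ) : instancesName n p (Nat.pair i k) =
    if k % 2 = 0 then k / 2 + 3 else raceValue n (pref p (Nat.pair i k)) i := by
  simp [instancesName, instanceValue]

variable {n p i}

theorem raceValue_ne_of_mem_raceInstance {m : ℕ} (hm : m ∈ raceInstance n p i) (k : ℕ) :
    raceValue n (pref p (Nat.pair i (2 * k + 1))) i ≠ m + 1 := by
  simpa [proj, instancesName_pair, Nat.add_mod] using hm (2 * k + 1)

theorem raceInstance_subset : raceInstance n p i ⊆ Set.Iio 2 := by
  intro m hm
  by_contra h
  apply hm (2 * (m - 2))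
  simp only [proj, instancesName_pair, Nat.mul_mod_right, if_true]
  simp only [Set.mem_Iio, not_lt] at h
  omega

theorem exists_aboveExcluded (h : ∀ l ≤ n, i < l → l ∉ namedSet p) :
    ∃ T, AboveExcluded n (pref p T) i := by
  choose! f hf using fun l hl hil => not_mem_namedSet_iff.1 (h l hl hil)
  refine ⟨(Finset.range (n + 1)).sup (f · + 1), fun l hl hil => mem_pref_iff.2 ⟨f l, ?_, ?_⟩⟩
  · exact Finset.le_sup (f := (f · + 1)) (by simpa using hl)
  · exact hf l (by simpa [Nat.lt_succ_iff] using hl) hil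

theorem raceInstance_nonempty : (raceInstance n p i).Nonempty := by
  by_cases h1 : 1 ∈ raceInstance n p i
  · exact ⟨1, h1⟩
  refine ⟨0, fun k' hk' => ?_⟩
  obtain ⟨k, hk⟩ : ∃ k, instancesName n p (Nat.pair i k) = 2 := by
    simpa [raceInstance, namedSet, proj] using h1
  rw [proj, instancesName_pair] at hk'
  rw [instancesName_pair] at hk
  split_ifs at hk hk' <;> try omega
  rw [raceValue_eq_two] at hk
  rw [raceValue_eq_one] at hk'
  rcases le_total k k' with hkk | hkk
  · exact hk'.2 (pref_subset_pref (Nat.pair_le_pair_right i hkk) hk.1)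
  · exact hk.2 fun l hl hil => pref_subset_pref (Nat.pair_le_pair_right i hkk) (hk'.1 l hl hil)

theorem above_not_mem_of_one_mem (h1 : 1 ∈ raceInstance n p i) (hi : i ∉ namedSet p) :
    ∀ l ≤ n, i < l → l ∉ namedSet p := by
  intro l hl hil
  obtain ⟨s, hs⟩ := not_mem_namedSet_iff.1 hi
  have hexcl : Excluded (pref p (Nat.pair i (2 * s + 1))) i :=
    mem_pref_iff.2 ⟨s, by have := Nat.right_le_pair i (2 * s + 1); omega, hs⟩
  have habove : AboveExcluded n (pref p (Nat.pair i (2 * s + 1))) i := by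
    by_contra h
    exact raceValue_ne_of_mem_raceInstance h1 s (raceValue_eq_two.2 ⟨hexcl, h⟩)
  obtain ⟨s', -, hs'⟩ := mem_pref_iff.1 (habove l (List.mem_range.2 (by omega)) hil)
  exact not_mem_namedSet_iff.2 ⟨s', hs'⟩

theorem not_mem_of_mem_of_ne_one {b : ℕ} (hb : b ∈ raceInstance n p i) (hb1 : b ≠ 1)
    (habove : ∀ l ≤ n, i < l → l ∉ namedSet p) : i ∉ namedSet p := by
  obtain rfl : b = 0 := by
    have := raceInstance_subset hb
    simp only [Set.mem_Iio] at this
    omega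
  obtain ⟨T, hT⟩ := exists_aboveExcluded habove
  have hle : T ≤ Nat.pair i (2 * T + 1) := by have := Nat.right_le_pair i (2 * T + 1); omega
  have hexcl : Excluded (pref p (Nat.pair i (2 * T + 1))) i := by
    by_contra h
    exact raceValue_ne_of_mem_raceInstance hb T <| raceValue_eq_one.2
      ⟨fun l hl hil => pref_subset_pref hle (hT l hl hil), h⟩
  obtain ⟨s, -, hs⟩ := mem_pref_iff.1 hexcl
  exact not_mem_namedSet_iff.2 ⟨s, hs⟩

end Instances

end CFinSucc

open CFinSucc

/-- `C_{n+1} ≤_sW C₂ⁿ`. -/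
theorem cfin_succ_swred_c2_pow (n : ℕ) :
    SWRed enumNegRep repNat (finProdRep n enumNegRep) (finProdRep n repNat)
      (CFin (n + 1)) (finProdProblem n (CFin 2)) := by
  refine ⟨prefixMap (firstOne n) (Nat.pair n 0), prefixMap (instanceValue n) 0,
    baireComputable_prefixMap (primrec_firstOne n) _,
    baireComputable_prefixMap (primrec_instanceValue n) _, ?_⟩
  rintro G hG p A hA ⟨a, ha, hAn⟩
  obtain rfl : A = namedSet p := Part.mem_some_iff.mp hA
  obtain ⟨q, hq, y, hy, hyB⟩ := hG (instancesName n p) (raceInstance n p ·)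
    (mem_finProdRep_iff.2 fun _ => Part.mem_some _)
    ⟨fun _ => raceInstance_nonempty.some, fun _ => ⟨Set.Nonempty.some_mem _, raceInstance_subset⟩⟩
  refine ⟨_, Part.mem_bind_iff.2 ⟨_, Part.mem_some _, Part.mem_bind_iff.2 ⟨q, hq, Part.mem_some _⟩⟩,
    _, Part.mem_some _, ?_, hAn⟩
  have hb (j : ℕ) (hj : j < n) :
      (pref q (0 + Nat.pair n 0)).getD (Nat.pair j 0) 0 ∈ raceInstance n p j := by
    have hyj : y ⟨j, hj⟩ = q (Nat.pair j 0) :=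
      Part.mem_some_iff.1 (mem_finProdRep_iff.1 hy ⟨j, hj⟩)
    rw [getD_pref (by simpa using Nat.pair_lt_pair_left 0 hj), ← hyj]
    exact (hyB ⟨j, hj⟩).1
  exact mem_of_race_answers _ ⟨a, ha⟩ hAn
    (fun j hj h1 => above_not_mem_of_one_mem (h1 ▸ hb j hj))
    (fun j hj => not_mem_of_mem_of_ne_one (hb j hj))
end

section
/- LPO* is strongly Weihrauch equivalent to the minimum function min : ℕ^ℕ → ℕ, p ↦ min{p(n) : n ∈ ℕ}. -/
open scoped Classical

/-!
Both reductions are realized by total single-valued computable maps.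

`LPO* ≤_sW min`: a name of `n` instances is sent to the sequence whose `m`-th term is `⟨n, c_m⟩`,
where the `i`-th binary digit of `c_m` is `0` once a zero of the `i`-th instance has appeared among
the first `m` entries of the name, and `1` before. Digits only drop and each one settles, so the
minimum is attained at a stage where every existing zero has been found, and its digits are the
answers.

`min ≤_sW LPO*`: for `p` ask the `p 0` questions "is `p k ≤ j` for some `k`?", `j < p 0`. The
answer switches to yes exactly at `j = min p`, so the first yes (or `p 0` if there is none) is the
minimum.
-/

theorem Nat.pair_le_pair_right_s15 (a : ℕ) {b c : ℕ} (h : b ≤ c) : Nat.pair a b ≤ Nat.pair a c :=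
  StrictMono.monotone (fun _ _ h => Nat.pair_lt_pair_right a h) h

theorem List.IsPrefix.getD_eq {u v : List ℕ} (h : u <+: v) {j : ℕ} (hj : j < u.length)
    (d : ℕ) : u.getD j d = v.getD j d := by
  rw [List.getD_eq_getElem _ _ hj, List.getD_eq_getElem _ _ (hj.trans_le h.length_le),
    h.getElem hj]

theorem List.findIdx_congr {α : Type*} {l : List α} {p q : α → Bool}
    (h : ∀ x ∈ l, p x = q x) : l.findIdx p = l.findIdx q := by
  induction l with
  | nil => rfl
  | cons a l ih =>
    simp only [List.findIdx_cons, h a List.mem_cons_self,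
      ih fun x hx => h x (List.mem_cons_of_mem a hx)]

theorem List.findIdx_range_eq_of_iff {P : ℕ → Bool} {n μ : ℕ} (hμ : μ ≤ n)
    (hP : ∀ j < n, P j ↔ μ ≤ j) : (List.range n).findIdx P = μ := by
  rcases hμ.lt_or_eq with hμ | rfl
  · rw [List.findIdx_eq (by simpa using hμ)]
    simp only [List.getElem_range]
    exact ⟨(hP μ hμ).2 le_rfl, fun j hj => by simpa using mt (hP j (hj.trans hμ)).1 (by omega)⟩
  · refine (List.findIdx_eq_length_of_false fun j hj => ?_).trans List.length_range
    simpa using mt (hP j (List.mem_range.mp hj)).1 (by simp at hj; omega)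

theorem pref_length (p : ℕ → ℕ) (m : ℕ) : (pref p m).length = m := by simp [pref]

theorem pref_getD (p : ℕ → ℕ) {m j : ℕ} (h : j < m) (d : ℕ) : (pref p m).getD j d = p j := by
  simp [pref, List.getD_eq_getElem?_getD, h]

def binEncode (l : List ℕ) : ℕ := l.foldr (fun b acc => b + 2 * acc) 0

def binDigit (c i : ℕ) : ℕ := c / 2 ^ i % 2

theorem binDigit_binEncode {l : List ℕ} (hl : ∀ b ∈ l, b ≤ 1) {i : ℕ} (hi : i < l.length) :
    binDigit (binEncode l) i = l.getD i 0 := by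
  induction l generalizing i with
  | nil => simp at hi
  | cons b l ih =>
    have hb : b ≤ 1 := hl b List.mem_cons_self
    show (b + 2 * binEncode l) / 2 ^ i % 2 = (b :: l).getD i 0
    cases i with
    | zero =>
      simp only [pow_zero, Nat.div_one, List.getD_cons_zero]
      omega
    | succ i =>
      rw [pow_succ', ← Nat.div_div_eq_div_mul,
        show (b + 2 * binEncode l) / 2 = binEncode l by omega]
      simpa [binDigit] using ih (fun c hc => hl c (List.mem_cons_of_mem b hc)) (by simpa using hi)

theorem binEncode_map_mono {f g : ℕ → ℕ} {l : List ℕ} (h : ∀ j ∈ l, f j ≤ g j) :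
    binEncode (l.map f) ≤ binEncode (l.map g) := by
  induction l with
  | nil => exact le_rfl
  | cons a l ih =>
    have hhead := h a List.mem_cons_self
    have htail := ih fun j hj => h j (List.mem_cons_of_mem a hj)
    show f a + 2 * binEncode (l.map f) ≤ g a + 2 * binEncode (l.map g)
    omega

theorem primrec_binEncode : Primrec binEncode :=
  Primrec.list_foldr Primrec.id (Primrec.const 0) (Primrec.nat_add.comp (Primrec.fst.comp
    Primrec.snd) (Primrec.nat_mul.comp (Primrec.const 2) (Primrec.snd.comp Primrec.snd))).to₂

theorem primrec_binDigit : Primrec₂ binDigit :=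
  have hpow : Primrec₂ (· ^ · : ℕ → ℕ → ℕ) := Primrec₂.unpaired'.mp Nat.Primrec.pow
  Primrec.nat_mod.comp (Primrec.nat_div.comp Primrec.fst (hpow.comp (Primrec.const 2)
    Primrec.snd)) (Primrec.const 2)

namespace BaireComputable

theorem of_approx (φ : (ℕ → ℕ) → ℕ → ℕ) (L : List ℕ → ℕ) (F : List ℕ → ℕ → ℕ)
    (hL : Primrec L) (hF : Primrec₂ F)
    (hL_mono : ∀ u v, u <+: v → L u ≤ L v)
    (hF_stable : ∀ u v, u <+: v → ∀ t < L u, F u t = F v t)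
    (hF_conv : ∀ p t, ∃ m, t < L (pref p m) ∧ F (pref p m) t = φ p t) :
    BaireComputable fun p => Part.some (φ p) := by
  refine ⟨fun u => (List.range (L u)).map (F u),
    (Primrec.list_map (Primrec.list_range.comp hL) hF).to_comp, fun u v huv => ?_, ?_⟩
  · show (List.range (L u)).map (F u) <+: (List.range (L v)).map (F v)
    have htake : (List.range (L u)).map (F u) = ((List.range (L v)).map (F v)).take (L u) := by
      rw [← List.map_take, List.take_range, min_eq_left (hL_mono u v huv)]
      exact List.map_congr_left fun t ht => hF_stable u v huv t (List.mem_range.mp ht)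
    exact htake ▸ List.take_prefix (L u) _
  · rintro p q hq t
    obtain ⟨m, hlt, heq⟩ := hF_conv p t
    exact ⟨m, by simp [Part.mem_some_iff.mp hq, hlt, heq]⟩

theorem of_causal (φ : (ℕ → ℕ) → ℕ → ℕ)
    (hφ : Primrec₂ fun (u : List ℕ) t => φ (fun j => u.getD j 0) t)
    (h_causal : ∀ g g' t, (∀ j ≤ t, g j = g' j) → φ g t = φ g' t) :
    BaireComputable fun p => Part.some (φ p) :=
  of_approx φ List.length _ Primrec.list_length hφ (fun _ _ h => h.length_le)
    (fun _ _ huv t ht => h_causal _ _ t fun _ hj => huv.getD_eq (by omega) 0)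
    (fun p t => ⟨t + 1, by simp [pref_length],
      h_causal _ _ t fun _ hj => pref_getD p (by omega) 0⟩)

theorem const_of_modulus (v : (ℕ → ℕ) → ℕ) (modulus : ℕ → ℕ) (hmodulus : Primrec modulus)
    (hv : Primrec fun u : List ℕ => v fun j => u.getD j 0)
    (h_modulus : ∀ g g', (∀ j ≤ modulus (g 0), g j = g' j) → v g = v g') :
    BaireComputable fun p => Part.some fun _ => v p := by
  refine of_approx _ (fun u => if modulus (u.getD 0 0) < u.length then u.length else 0)
    (fun u _ => v fun j => u.getD j 0) ?_ (hv.comp Primrec.fst).to₂ ?_ ?_ ?_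
  · exact Primrec.ite (Primrec.nat_lt.comp (hmodulus.comp ((Primrec.list_getD 0).comp
      Primrec.id (Primrec.const 0))) Primrec.list_length) Primrec.list_length (Primrec.const 0)
  · intro u v huv
    split_ifs with hu hv
    · exact huv.length_le
    · rw [huv.getD_eq (by omega) 0] at hu
      exact absurd (hu.trans_le huv.length_le) hv
    all_goals omega
  · intro u v huv t ht
    have hu : modulus (u.getD 0 0) < u.length := by
      by_contra h
      rw [if_neg h] at ht
      omega
    exact h_modulus _ _ fun j hj => huv.getD_eq (by omega) 0
  · intro p t
    have h0 : (pref p (modulus (p 0) + t + 1)).getD 0 0 = p 0 := pref_getD p (by omega) 0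
    refine ⟨modulus (p 0) + t + 1, ?_, ?_⟩
    · rw [h0, pref_length, if_pos (by omega)]
      omega
    · exact h_modulus _ _ fun j hj => pref_getD p (by rw [h0] at hj; omega) 0

end BaireComputable

theorem SWRed.of_total {X Y Z W : Type*} {δX : RepSp X} {δY : RepSp Y} {δZ : RepSp Z}
    {δW : RepSp W} {f : X → Set Y} {g : Z → Set W} (h k : (ℕ → ℕ) → ℕ → ℕ)
    (hh : BaireComputable fun q => Part.some (h q))
    (hk : BaireComputable fun p => Part.some (k p))
    (hred : ∀ p x, x ∈ δX.δ p → (f x).Nonempty → ∃ z ∈ δZ.δ (k p), (g z).Nonempty ∧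
      ∀ q, ∀ w ∈ δW.δ q, w ∈ g z → ∃ y ∈ δY.δ (h q), y ∈ f x) :
    SWRed δX δY δZ δW f g := by
  refine ⟨_, _, hh, hk, fun G hG p x hx hfx => ?_⟩
  obtain ⟨z, hz, hgz, hsol⟩ := hred p x hx hfx
  obtain ⟨q, hq, w, hw, hwg⟩ := hG _ z hz hgz
  obtain ⟨y, hy, hyf⟩ := hsol q w hw hwg
  exact ⟨h q, Part.mem_bind_iff.mpr ⟨k p, Part.mem_some _,
    Part.mem_bind_iff.mpr ⟨q, hq, Part.mem_some _⟩⟩, y, hy, hyf⟩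

theorem starRep_δ_of_eq_some {X : Type*} {δX : RepSp X} {e : (ℕ → ℕ) → X}
    (he : ∀ p, δX.δ p = Part.some (e p)) (r : ℕ → ℕ) :
    (starRep δX).δ r = Part.some ⟨r 0, fun i => e (proj (fun m => r (m + 1)) i)⟩ := by
  have hdom : ∀ i : Fin (r 0), ∃ x, x ∈ δX.δ (proj (fun m => r (m + 1)) i) :=
    fun i => ⟨_, by rw [he]; exact Part.mem_some _⟩
  refine Part.eq_some_iff.mpr (mem_part_mk hdom (congrArg _ (funext fun i => ?_)))
  exact Part.mem_some_iff.mp (he _ ▸ Classical.choose_spec (hdom i))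

theorem starRep_repBaire_δ (r : ℕ → ℕ) :
    (starRep repBaire).δ r = Part.some ⟨r 0, fun i k => r (Nat.pair i k + 1)⟩ :=
  starRep_δ_of_eq_some (e := id) (fun _ => rfl) r

theorem starRep_repNat_δ (q : ℕ → ℕ) :
    (starRep repNat).δ q = Part.some ⟨q 0, fun i => q (Nat.pair i 0 + 1)⟩ :=
  starRep_δ_of_eq_some (e := fun p => p 0) (fun _ => rfl) q

theorem starProblem_LPOProblem_nonempty (x : Σ n, Fin n → ℕ → ℕ) :
    (starProblem LPOProblem x).Nonempty :=
  ⟨⟨x.1, fun i => if ∃ k, x.2 i k = 0 then 1 else 0⟩, rfl, fun _ => rfl⟩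

theorem minProblem_nonempty (p : ℕ → ℕ) : (minProblem p).Nonempty :=
  ⟨sInf (Set.range p), Nat.sInf_mem (Set.range_nonempty p), fun m => Nat.sInf_le ⟨m, rfl⟩⟩

theorem eq_of_mem_minProblem {p : ℕ → ℕ} {a b : ℕ} (ha : a ∈ minProblem p)
    (hb : b ∈ minProblem p) : a = b := by
  obtain ⟨⟨i, rfl⟩, ha⟩ := ha
  obtain ⟨⟨j, rfl⟩, hb⟩ := hb
  exact le_antisymm (ha j) (hb i)

theorem exists_le_iff_of_mem_minProblem {p : ℕ → ℕ} {μ : ℕ} (hμ : μ ∈ minProblem p) (j : ℕ) :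
    (∃ k, p k ≤ j) ↔ μ ≤ j := by
  obtain ⟨⟨k, rfl⟩, hmin⟩ := hμ
  exact ⟨fun ⟨k', hk'⟩ => (hmin k').trans hk', fun h => ⟨k, h⟩⟩

namespace LPOStarToMin

noncomputable def code (r : ℕ → ℕ) : ℕ :=
  Nat.pair (r 0) (binEncode ((List.range (r 0)).map fun i =>
    if ∃ k, r (Nat.pair i k + 1) = 0 then 0 else 1))

/-- `r (j + 1)` is entry `(Nat.unpair j).2` of instance `(Nat.unpair j).1`; stage `m` reads `r`
only below `m + 1`. -/
def codeApprox (r : ℕ → ℕ) (m : ℕ) : ℕ :=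
  Nat.pair (r 0) (binEncode ((List.range (r 0)).map fun i =>
    if ∃ j < m, (Nat.unpair j).1 = i ∧ r (j + 1) = 0 then 0 else 1))

def decode (a : ℕ) : ℕ → ℕ := fun t =>
  Nat.casesOn t (Nat.unpair a).1 fun t' => 1 - binDigit (Nat.unpair a).2 (Nat.unpair t').1

theorem code_le_codeApprox (r : ℕ → ℕ) (m : ℕ) : code r ≤ codeApprox r m := by
  refine Nat.pair_le_pair_right_s15 _ (binEncode_map_mono fun i _ => ?_)
  by_cases hm : ∃ j < m, (Nat.unpair j).1 = i ∧ r (j + 1) = 0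
  · obtain ⟨j, -, rfl, hj⟩ := hm
    rw [if_pos ⟨(Nat.unpair j).2, by rwa [Nat.pair_unpair]⟩]
    exact Nat.zero_le _
  · rw [if_neg hm]
    split_ifs <;> omega

theorem exists_codeApprox_eq_code (r : ℕ → ℕ) : ∃ m, codeApprox r m = code r := by
  have hfound : ∀ i, ∀ᶠ m in Filter.atTop, ((∃ j < m, (Nat.unpair j).1 = i ∧ r (j + 1) = 0) ↔
      ∃ k, r (Nat.pair i k + 1) = 0) := by
    intro i
    by_cases h : ∃ k, r (Nat.pair i k + 1) = 0
    · obtain ⟨k, hk⟩ := h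
      filter_upwards [Filter.eventually_gt_atTop (Nat.pair i k)] with m hm
      exact ⟨fun _ => ⟨k, hk⟩, fun _ => ⟨Nat.pair i k, hm, by simp, hk⟩⟩
    · refine Filter.Eventually.of_forall fun m => iff_of_false ?_ h
      rintro ⟨j, -, rfl, hj⟩
      exact h ⟨(Nat.unpair j).2, by rwa [Nat.pair_unpair]⟩
  obtain ⟨m, hm⟩ := ((Filter.eventually_all_finset (Finset.range (r 0))).2
    fun i _ => hfound i).exists
  refine ⟨m, congrArg (Nat.pair _ ∘ binEncode) (List.map_congr_left fun i hi => ?_)⟩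
  exact if_congr (hm i (by simpa using hi)) rfl rfl

theorem code_mem_minProblem (r : ℕ → ℕ) : code r ∈ minProblem (codeApprox r) :=
  ⟨exists_codeApprox_eq_code r, code_le_codeApprox r⟩

theorem decode_code_mem (r : ℕ → ℕ) :
    (⟨decode (code r) 0, fun i => decode (code r) (Nat.pair i 0 + 1)⟩ : Σ n, Fin n → ℕ) ∈
      starProblem LPOProblem ⟨r 0, fun i k => r (Nat.pair i k + 1)⟩ := by
  have hlen : decode (code r) 0 = r 0 := by simp [decode, code]
  refine ⟨hlen.symm, fun i => ?_⟩
  show decode (code r) (Nat.pair i 0 + 1) ∈ _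
  have hbit := binDigit_binEncode (l := (List.range (r 0)).map fun i =>
      if ∃ k, r (Nat.pair i k + 1) = 0 then 0 else 1)
    (by simp only [List.mem_map]; rintro _ ⟨i, -, rfl⟩; split_ifs <;> omega) (i := i) (by simp)
  simp only [decode, code, Nat.unpair_pair] at hbit ⊢
  rw [hbit]
  by_cases h : ∃ k, r (Nat.pair i k + 1) = 0 <;> simp [LPOProblem, h]

open Primrec in
theorem primrec_codeApprox :
    Primrec₂ fun (u : List ℕ) m => codeApprox (fun j => u.getD j 0) m := by
  have hu0 : Primrec fun a : List ℕ × ℕ => a.1.getD 0 0 := (list_getD 0).comp fst (const 0)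
  have hR : PrimrecRel fun (j : ℕ) (b : (List ℕ × ℕ) × ℕ) =>
      (Nat.unpair j).1 = b.2 ∧ b.1.1.getD (j + 1) 0 = 0 :=
    (Primrec.eq.comp (fst.comp (unpair.comp fst)) (snd.comp snd)).and
      (Primrec.eq.comp ((list_getD 0).comp (fst.comp (fst.comp snd)) (succ.comp fst)) (const 0))
  have hfound : PrimrecRel fun (a : List ℕ × ℕ) (i : ℕ) =>
      ∃ j < a.2, (Nat.unpair j).1 = i ∧ a.1.getD (j + 1) 0 = 0 :=
    (hR.exists_mem_list.comp (list_range.comp (snd.comp fst)) Primrec.id).of_eq fun _ => by simp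
  exact Primrec₂.natPair.comp hu0 (primrec_binEncode.comp
    (list_map (list_range.comp hu0) (ite hfound (const 0) (const 1))))

theorem codeApprox_congr {g g' : ℕ → ℕ} {m : ℕ} (h : ∀ j ≤ m, g j = g' j) :
    codeApprox g m = codeApprox g' m := by
  have hbit : ∀ i, (∃ j < m, (Nat.unpair j).1 = i ∧ g (j + 1) = 0) ↔
      ∃ j < m, (Nat.unpair j).1 = i ∧ g' (j + 1) = 0 := fun i =>
    exists_congr fun j => and_congr_right fun hj => by rw [h (j + 1) hj]
  simp only [codeApprox, h 0 (Nat.zero_le m), hbit]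

theorem baireComputable_codeApprox : BaireComputable fun r => Part.some (codeApprox r) :=
  BaireComputable.of_causal _ primrec_codeApprox fun _ _ _ => codeApprox_congr

open Primrec in
theorem baireComputable_decode : BaireComputable fun q => Part.some (decode (q 0)) := by
  have hu0 : Primrec fun a : List ℕ × ℕ => a.1.getD 0 0 := (list_getD 0).comp fst (const 0)
  refine BaireComputable.of_causal _ ?_ fun g g' t h => by rw [h 0 (Nat.zero_le t)]
  exact (nat_casesOn snd (fst.comp (unpair.comp hu0)) (nat_sub.comp (const 1)
    (primrec_binDigit.comp (snd.comp (unpair.comp (hu0.comp fst)))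
      (fst.comp (unpair.comp snd)))).to₂).of_eq fun ⟨u, t⟩ => by cases t <;> rfl

theorem swRed : SWRed (starRep repBaire) (starRep repNat) repBaire repNat
    (starProblem LPOProblem) minProblem := by
  refine SWRed.of_total _ _ baireComputable_decode baireComputable_codeApprox
    fun r x hx _ => ?_
  rw [starRep_repBaire_δ, Part.mem_some_iff] at hx
  subst hx
  refine ⟨_, Part.mem_some _, minProblem_nonempty _, fun q w hw hmin => ?_⟩
  have hq : q 0 = code r :=
    eq_of_mem_minProblem (Part.mem_some_iff.mp hw ▸ hmin) (code_mem_minProblem r)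
  rw [starRep_repNat_δ, hq]
  exact ⟨_, Part.mem_some _, decode_code_mem r⟩

end LPOStarToMin

namespace MinToLPOStar

def instances (p : ℕ → ℕ) : ℕ → ℕ := fun t =>
  Nat.casesOn t (p 0) fun m => if p (Nat.unpair m).2 ≤ (Nat.unpair m).1 then 0 else 1

def firstYes (q : ℕ → ℕ) : ℕ := (List.range (q 0)).findIdx fun j => q (Nat.pair j 0 + 1) = 1

theorem instances_mem_δ (p : ℕ → ℕ) :
    ⟨p 0, fun j k => if p k ≤ j then 0 else 1⟩ ∈ (starRep repBaire).δ (instances p) := by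
  rw [starRep_repBaire_δ]
  simp [instances]

theorem firstYes_mem_minProblem {p q : ℕ → ℕ}
    (hq : ⟨q 0, fun i => q (Nat.pair i 0 + 1)⟩ ∈
      starProblem LPOProblem ⟨p 0, fun j k => if p k ≤ j then 0 else 1⟩) :
    firstYes q ∈ minProblem p := by
  obtain ⟨μ, hμ⟩ := minProblem_nonempty p
  obtain ⟨hlen, hans⟩ := hq
  replace hlen : p 0 = q 0 := hlen
  suffices firstYes q = μ from this ▸ hμ
  refine List.findIdx_range_eq_of_iff (hlen ▸ hμ.2 0) fun j hj => ?_
  have hans_j : q (Nat.pair j 0 + 1) = if ∃ k, (if p k ≤ j then 0 else 1) = 0 then 1 else 0 :=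
    hans ⟨j, hlen ▸ hj⟩
  simp [hans_j, ← exists_le_iff_of_mem_minProblem hμ]

open Primrec in
theorem baireComputable_instances : BaireComputable fun p => Part.some (instances p) := by
  have hu0 : Primrec fun a : List ℕ × ℕ => a.1.getD 0 0 := (list_getD 0).comp fst (const 0)
  refine BaireComputable.of_causal _ ?_ fun g g' t h => ?_
  · exact (nat_casesOn snd hu0 (ite (nat_le.comp ((list_getD 0).comp (fst.comp fst)
      (snd.comp (unpair.comp snd))) (fst.comp (unpair.comp snd))) (const 0) (const 1)).to₂).of_eq
      fun ⟨u, t⟩ => by cases t <;> rfl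
  · cases t with
    | zero => exact h 0 le_rfl
    | succ m =>
      simp only [instances, h (Nat.unpair m).2 ((Nat.unpair_right_le m).trans m.le_succ)]

open Primrec in
theorem baireComputable_firstYes : BaireComputable fun q => Part.some fun _ => firstYes q := by
  have hu0 : Primrec fun u : List ℕ => u.getD 0 0 := (list_getD 0).comp Primrec.id (const 0)
  refine BaireComputable.const_of_modulus _ (Nat.pair · 0)
    (Primrec₂.natPair.comp Primrec.id (const 0)) ?_ fun g g' h => ?_
  · exact list_findIdx (list_range.comp hu0) (Primrec.eq.comp ((list_getD 0).comp fst
      (succ.comp (Primrec₂.natPair.comp snd (const 0)))) (const 1)).decide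
  · have h0 : g 0 = g' 0 := h 0 (Nat.zero_le _)
    unfold firstYes
    rw [← h0]
    refine List.findIdx_congr fun j hj => ?_
    rw [h _ (Nat.pair_lt_pair_left 0 (List.mem_range.mp hj))]

theorem swRed : SWRed repBaire repNat (starRep repBaire) (starRep repNat)
    minProblem (starProblem LPOProblem) := by
  refine SWRed.of_total _ _ baireComputable_firstYes baireComputable_instances
    fun p x hx _ => ?_
  obtain rfl : p = x := (Part.mem_some_iff.mp hx).symm
  refine ⟨_, instances_mem_δ p, starProblem_LPOProblem_nonempty _, fun q w hw hans => ?_⟩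
  rw [starRep_repNat_δ, Part.mem_some_iff] at hw
  subst hw
  exact ⟨_, Part.mem_some _, firstYes_mem_minProblem hans⟩

end MinToLPOStar

/-- `LPO* ≡_sW min`. -/
theorem lpo_star_equiv_min :
    SWEquiv (starRep repBaire) (starRep repNat) repBaire repNat
      (starProblem LPOProblem) minProblem :=
  ⟨LPOStarToMin.swRed, MinToLPOStar.swRed⟩
end

section
/- Strong Weihrauch reducibility respects cardinality: if f ≤_sW g then #f ≤ #g, where #f is the maximal cardinality of a set M ⊆ dom(f) such that {f(x) : x ∈ M} consists of pairwise disjoint sets (assuming these cardinalities exist). -/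
open scoped Classical

/-! A strong reduction `(H, K)` of `f` to `g` works for every realizer of `g`, in particular
for one that, on every instance having a fixed `w` among its solutions, answers with the same
name `q` of `w`. So `H q` names a common solution of all `f x` whose instances `K p` (for a name
`p` of `x`) admit `w`. Hence, if the images `f x` (`x ∈ M`) are pairwise disjoint, so are the
images `g z` of the instances `z` that `K` assigns to the points of `M`, and `x ↦ z` is
injective. -/

open Function

section Reduction

variable {X Y Z W : Type*} {δX : RepSp X} {δY : RepSp Y} {δZ : RepSp Z} {δW : RepSp W}
  {f : X → Set Y} {g : Z → Set W}

/-- The pair `(H, K)` witnesses `f ≤_sW g`, computability aside. -/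
def IsSWReduction (δX : RepSp X) (δY : RepSp Y) (δZ : RepSp Z) (δW : RepSp W)
    (f : X → Set Y) (g : Z → Set W) (H K : (ℕ → ℕ) →. (ℕ → ℕ)) : Prop :=
  ∀ G : (ℕ → ℕ) →. (ℕ → ℕ), Realizes δZ δW g G →
    Realizes δX δY f (fun p => (K p).bind fun r => (G r).bind fun q => H q)

noncomputable def selectorRealizer (δZ : RepSp Z) (δW : RepSp W) (g : Z → Set W)
    (s : ∀ z, (g z).Nonempty → W) : (ℕ → ℕ) →. (ℕ → ℕ) :=
  fun r => (δZ.δ r).bind fun z => Part.mk (g z).Nonempty fun h => (δW.surj (s z h)).choose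

theorem mem_selectorRealizer {s : ∀ z, (g z).Nonempty → W} {r : ℕ → ℕ} {z : Z}
    (hz : z ∈ δZ.δ r) (h : (g z).Nonempty) :
    (δW.surj (s z h)).choose ∈ selectorRealizer δZ δW g s r :=
  Part.mem_bind_iff.mpr ⟨z, hz, mem_part_mk h rfl⟩

theorem realizes_selectorRealizer {s : ∀ z, (g z).Nonempty → W} (hs : ∀ z h, s z h ∈ g z) :
    Realizes δZ δW g (selectorRealizer δZ δW g s) :=
  fun _ z hz h => ⟨_, mem_selectorRealizer hz h, s z h, (δW.surj (s z h)).choose_spec, hs z h⟩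

namespace IsSWReduction

variable {H K : (ℕ → ℕ) →. (ℕ → ℕ)}

theorem exists_instance (hred : IsSWReduction δX δY δZ δW f g H K) {p : ℕ → ℕ} {x : X}
    (hp : x ∈ δX.δ p) (hx : (f x).Nonempty) :
    ∃ r ∈ K p, ∃ z ∈ δZ.δ r, (g z).Nonempty := by
  obtain ⟨q, hq, -⟩ := hred _ (realizes_selectorRealizer fun _ h => h.some_mem) p x hp hx
  obtain ⟨r, hr, hq⟩ := Part.mem_bind_iff.mp hq
  obtain ⟨s, hs, -⟩ := Part.mem_bind_iff.mp hq
  obtain ⟨z, hz, hs⟩ := Part.mem_bind_iff.mp hs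
  exact ⟨r, hr, z, hz, (Part.mem_mk_iff.mp hs).1⟩

theorem exists_solution_of_mem (hred : IsSWReduction δX δY δZ δW f g H K) {p r : ℕ → ℕ}
    {x : X} {z : Z} {w : W} (hp : x ∈ δX.δ p) (hx : (f x).Nonempty)
    (hr : r ∈ K p) (hz : z ∈ δZ.δ r) (hw : w ∈ g z) :
    ∃ q ∈ H (δW.surj w).choose, ∃ y ∈ δY.δ q, y ∈ f x := by
  let s : ∀ z, (g z).Nonempty → W := fun z h => if w ∈ g z then w else h.some
  have hs : ∀ z h, s z h ∈ g z := fun z h => by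
    by_cases hwz : w ∈ g z
    · simp [s, hwz]
    · simpa [s, hwz] using h.some_mem
  obtain ⟨q, hq, hsol⟩ := hred _ (realizes_selectorRealizer hs) p x hp hx
  obtain ⟨r', hr', hq⟩ := Part.mem_bind_iff.mp hq
  obtain ⟨t, ht, hq⟩ := Part.mem_bind_iff.mp hq
  have hname : (δW.surj w).choose ∈ selectorRealizer δZ δW g s r := by
    simpa [s, hw] using mem_selectorRealizer (s := s) hz ⟨w, hw⟩
  obtain rfl := Part.mem_unique hr' hr
  obtain rfl := Part.mem_unique ht hname
  exact ⟨q, hq, hsol⟩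

theorem disjoint_of_disjoint (hred : IsSWReduction δX δY δZ δW f g H K)
    {p₁ p₂ r₁ r₂ : ℕ → ℕ} {x₁ x₂ : X} {z₁ z₂ : Z}
    (hp₁ : x₁ ∈ δX.δ p₁) (hx₁ : (f x₁).Nonempty) (hr₁ : r₁ ∈ K p₁) (hz₁ : z₁ ∈ δZ.δ r₁)
    (hp₂ : x₂ ∈ δX.δ p₂) (hx₂ : (f x₂).Nonempty) (hr₂ : r₂ ∈ K p₂) (hz₂ : z₂ ∈ δZ.δ r₂)
    (hf : Disjoint (f x₁) (f x₂)) : Disjoint (g z₁) (g z₂) := by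
  refine Set.disjoint_left.mpr fun w hw₁ hw₂ => ?_
  obtain ⟨q₁, hq₁, y₁, hy₁, hfy₁⟩ := hred.exists_solution_of_mem hp₁ hx₁ hr₁ hz₁ hw₁
  obtain ⟨q₂, hq₂, y₂, hy₂, hfy₂⟩ := hred.exists_solution_of_mem hp₂ hx₂ hr₂ hz₂ hw₂
  rw [Part.mem_unique hq₁ hq₂] at hy₁
  rw [Part.mem_unique hy₁ hy₂] at hfy₁
  exact Set.disjoint_left.mp hf hfy₁ hfy₂

end IsSWReduction

end Reduction

section Card

variable {X Y : Type} {f : X → Set Y}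

theorem le_problemCard {M : Set X} (hM : ∀ x ∈ M, (f x).Nonempty) (hd : M.PairwiseDisjoint f) :
    Cardinal.mk M ≤ problemCard f :=
  le_csSup ⟨Cardinal.mk X, by rintro _ ⟨M', -, -, rfl⟩; exact Cardinal.mk_set_le M'⟩
    ⟨M, hM, hd, rfl⟩

theorem problemCard_le_of_forall {c : Cardinal}
    (h : ∀ M : Set X, (∀ x ∈ M, (f x).Nonempty) → M.PairwiseDisjoint f → Cardinal.mk M ≤ c) :
    problemCard f ≤ c :=
  csSup_le ⟨_, ∅, by simp, by simp, rfl⟩ fun _ ⟨M, hM, hd, hc⟩ => hc ▸ h M hM hd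

theorem mk_le_problemCard_of_pairwise_disjoint {ι : Type} (φ : ι → X)
    (hne : ∀ i, (f (φ i)).Nonempty) (hd : Pairwise (Disjoint on fun i => f (φ i))) :
    Cardinal.mk ι ≤ problemCard f := by
  have hinj : Injective φ := fun i j hij => by
    by_contra hne'
    obtain ⟨y, hy⟩ := hne i
    exact Set.disjoint_left.mp (hd hne') hy (show y ∈ f (φ j) from hij ▸ hy)
  calc Cardinal.mk ι = Cardinal.mk (Set.range φ) := (Cardinal.mk_range_eq φ hinj).symm
    _ ≤ problemCard f := le_problemCard (by rintro _ ⟨i, rfl⟩; exact hne i)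
        (by rintro _ ⟨i, rfl⟩ _ ⟨j, rfl⟩ hij; exact hd (ne_of_apply_ne φ hij))

end Card

theorem IsSWReduction.problemCard_le_problemCard {X Y Z W : Type} {δX : RepSp X} {δY : RepSp Y}
    {δZ : RepSp Z} {δW : RepSp W} {f : X → Set Y} {g : Z → Set W} {H K : (ℕ → ℕ) →. (ℕ → ℕ)}
    (hred : IsSWReduction δX δY δZ δW f g H K) : problemCard f ≤ problemCard g := by
  refine problemCard_le_of_forall fun M hM hd => ?_
  choose p hp using fun x : M => δX.surj x
  choose r hr z hz hgz using fun x : M => hred.exists_instance (hp x) (hM x x.2)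
  refine mk_le_problemCard_of_pairwise_disjoint z hgz fun x₁ x₂ hne => ?_
  exact hred.disjoint_of_disjoint (hp x₁) (hM x₁ x₁.2) (hr x₁) (hz x₁) (hp x₂) (hM x₂ x₂.2)
    (hr x₂) (hz x₂) (hd x₁.2 x₂.2 (Subtype.coe_injective.ne hne))

/-- strong Weihrauch reducibility respects cardinality. -/
theorem swred_card (X Y Z W : Type) (δX : RepSp X) (δY : RepSp Y)
    (δZ : RepSp Z) (δW : RepSp W) (f : X → Set Y) (g : Z → Set W)
    (h : SWRed δX δY δZ δW f g) :
    problemCard f ≤ problemCard g := by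
  obtain ⟨H, K, -, -, hred⟩ := h
  exact IsSWReduction.problemCard_le_problemCard hred
end
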